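/- arXiv:2401.17651 — 6 statements merged into one kernel-verified Lean document; each statement's English description precedes it below -/
import Mathlib

section
/- Let q ≥ 2 and let h, h̄ be nonnegative reals. Then (1/q)(h^q - h̄^q) - h̄^{q-1}(h - h̄) ≥ c·|h - h̄|^q, where c is the positive constant c = (q-1)·min{∫₀¹∫₀ˢ λ^{q-2} dλ ds, ∫₀¹∫₀ˢ (1-λ)^{q-2} dλ ds} = (q-1)·min{1/(q(q-1)), B} > 0 with B = ∫₀¹∫₀ˢ(1-λ)^{q-2} dλ ds. -/
open Real intervalIntegral

private lemma superadd {x y p : ℝ} (hx : 0 ≤ x) (hy : 0 ≤ y) (hp : 1 ≤ p) :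
    x ^ p + y ^ p ≤ (x + y) ^ p := by
  have hp0 : p ≠ 0 := by linarith
  have hxy : 0 ≤ x + y := by linarith
  have hsplit : ∀ z : ℝ, 0 ≤ z → z ^ p = z * z ^ (p - 1) := by
    intro z hz
    rw [show p = 1 + (p - 1) by ring, Real.rpow_add' hz (by simpa using hp0), Real.rpow_one]
    norm_num
  have h1 : x ^ p ≤ x * (x + y) ^ (p - 1) := by
    rw [hsplit x hx]
    exact mul_le_mul_of_nonneg_left
      (Real.rpow_le_rpow hx (le_add_of_nonneg_right hy) (by linarith)) hx
  have h2 : y ^ p ≤ y * (x + y) ^ (p - 1) := by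
    rw [hsplit y hy]
    exact mul_le_mul_of_nonneg_left
      (Real.rpow_le_rpow hy (le_add_of_nonneg_left hx) (by linarith)) hy
  calc x ^ p + y ^ p ≤ x * (x + y) ^ (p - 1) + y * (x + y) ^ (p - 1) := by linarith
    _ = (x + y) * (x + y) ^ (p - 1) := by ring
    _ = (x + y) ^ p := (hsplit _ hxy).symm

private lemma case1 (q : ℝ) (hq : 2 ≤ q) (b : ℝ) (hb : 0 ≤ b) (t : ℝ) (ht : 0 ≤ t) :
    t ^ q ≤ (b + t) ^ q - b ^ q - q * b ^ (q - 1) * t := by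
  have hq1 : (1:ℝ) ≤ q := by linarith
  set F : ℝ → ℝ := fun t => (b + t) ^ q - b ^ q - q * b ^ (q - 1) * t - t ^ q with hF
  have hder : ∀ x : ℝ, HasDerivAt F
      (q * (b + x) ^ (q - 1) - q * b ^ (q - 1) - q * x ^ (q - 1)) x := by
    intro x
    have h1 : HasDerivAt (fun x : ℝ => (b + x) ^ q) (q * (b + x) ^ (q - 1)) x := by
      simpa using (HasDerivAt.const_add b (hasDerivAt_id x)).rpow_const (p := q) (Or.inr hq1)
    have h2 : HasDerivAt (fun x : ℝ => q * b ^ (q - 1) * x) (q * b ^ (q - 1)) x := by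
      simpa using (hasDerivAt_id x).const_mul (q * b ^ (q - 1))
    have h3 : HasDerivAt (fun x : ℝ => x ^ q) (q * x ^ (q - 1)) x := by
      simpa [mul_comm] using Real.hasDerivAt_rpow_const (p := q) (Or.inr hq1)
    exact ((h1.sub_const (b ^ q)).sub h2).sub h3
  have hmono : MonotoneOn F (Set.Ici 0) := by
    apply monotoneOn_of_deriv_nonneg (convex_Ici 0)
      (fun x _ => (hder x).continuousAt.continuousWithinAt)
      (fun x _ => ((hder x).differentiableAt).differentiableWithinAt)
    intro x hx
    rw [(hder x).deriv]
    have hx0 : (0:ℝ) ≤ x := le_of_lt (by simpa using hx)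
    have := superadd hb hx0 (by linarith : (1:ℝ) ≤ q - 1)
    nlinarith [this]
  have h0 : F 0 = 0 := by
    simp [hF, Real.zero_rpow (by positivity : q ≠ 0)]
  have := hmono (Set.self_mem_Ici) (Set.mem_Ici.mpr ht) ht
  rw [h0] at this
  simp only [hF] at this
  linarith

private lemma case2 (q : ℝ) (hq : 2 ≤ q) (b : ℝ) (t : ℝ) (ht : 0 ≤ t) (htb : t ≤ b) :
    t ^ q ≤ (b - t) ^ q - b ^ q + q * b ^ (q - 1) * t := by
  have hq1 : (1:ℝ) ≤ q := by linarith
  set G : ℝ → ℝ := fun t => (b - t) ^ q - b ^ q + q * b ^ (q - 1) * t - t ^ q with hG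
  have hder : ∀ x : ℝ, HasDerivAt G
      (-(q * (b - x) ^ (q - 1)) + q * b ^ (q - 1) - q * x ^ (q - 1)) x := by
    intro x
    have h1 : HasDerivAt (fun x : ℝ => (b - x) ^ q) (-(q * (b - x) ^ (q - 1))) x := by
      simpa using ((hasDerivAt_id x).const_sub b).rpow_const (p := q) (Or.inr hq1)
    have h2 : HasDerivAt (fun x : ℝ => q * b ^ (q - 1) * x) (q * b ^ (q - 1)) x := by
      simpa using (hasDerivAt_id x).const_mul (q * b ^ (q - 1))
    have h3 : HasDerivAt (fun x : ℝ => x ^ q) (q * x ^ (q - 1)) x := by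
      simpa [mul_comm] using Real.hasDerivAt_rpow_const (p := q) (Or.inr hq1)
    exact ((h1.sub_const (b ^ q)).add h2).sub h3
  have hmono : MonotoneOn G (Set.Icc 0 b) := by
    apply monotoneOn_of_deriv_nonneg (convex_Icc 0 b)
      (fun x _ => (hder x).continuousAt.continuousWithinAt)
      (fun x _ => ((hder x).differentiableAt).differentiableWithinAt)
    intro x hx
    rw [(hder x).deriv]
    rw [interior_Icc] at hx
    have hx0 : (0:ℝ) ≤ x := le_of_lt hx.1
    have hxb : (0:ℝ) ≤ b - x := by linarith [hx.2]
    have := superadd hxb hx0 (by linarith : (1:ℝ) ≤ q - 1)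
    rw [show b - x + x = b by ring] at this
    nlinarith [this]
  have h0 : G 0 = 0 := by
    simp [hG, Real.zero_rpow (by positivity : q ≠ 0)]
  have hb0 : (0:ℝ) ≤ b := le_trans ht htb
  have := hmono (Set.mem_Icc.mpr ⟨le_refl 0, hb0⟩) (Set.mem_Icc.mpr ⟨ht, htb⟩) ht
  rw [h0] at this
  simp only [hG] at this
  linarith

/-- For `q ≥ 2` and nonnegative reals `h, h̄`, the second-order Taylor remainder of
`t ↦ t^q/q` at `h̄` is bounded below by `c·|h - h̄|^q` with the explicit positive constant
`c = (q-1)·min{∫₀¹∫₀ˢ λ^{q-2}, ∫₀¹∫₀ˢ (1-λ)^{q-2}}`. -/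
theorem stmt_3 (q : ℝ) (hq : 2 ≤ q) (h hb : ℝ) (hh : 0 ≤ h) (hhb : 0 ≤ hb) :
    let A : ℝ := ∫ s in (0:ℝ)..1, ∫ l in (0:ℝ)..s, l ^ (q - 2)
    let B : ℝ := ∫ s in (0:ℝ)..1, ∫ l in (0:ℝ)..s, (1 - l) ^ (q - 2)
    0 < (q - 1) * min A B ∧
    (1 / q) * (h ^ q - hb ^ q) - hb ^ (q - 1) * (h - hb)
      ≥ (q - 1) * min A B * |h - hb| ^ q := by
  intro A B
  have hq0 : (0:ℝ) < q := by linarith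
  have hq1 : (0:ℝ) < q - 1 := by linarith
  -- compute A
  have innerA : ∀ s : ℝ, (∫ l in (0:ℝ)..s, l ^ (q - 2)) = s ^ (q - 1) / (q - 1) := by
    intro s
    rw [integral_rpow (Or.inl (by linarith : (-1:ℝ) < q - 2)),
      show q - 2 + 1 = q - 1 by ring, Real.zero_rpow (by linarith : q - 1 ≠ 0)]
    ring
  have hA : A = 1 / ((q - 1) * q) := by
    show (∫ s in (0:ℝ)..1, ∫ l in (0:ℝ)..s, l ^ (q - 2)) = _
    simp_rw [innerA]
    rw [intervalIntegral.integral_div, integral_rpow (Or.inl (by linarith : (-1:ℝ) < q - 1)),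
      show q - 1 + 1 = q by ring, Real.one_rpow, Real.zero_rpow (by linarith : q ≠ 0)]
    field_simp
    ring
  -- compute B
  have innerB : ∀ s : ℝ, (∫ l in (0:ℝ)..s, (1 - l) ^ (q - 2))
      = (1 - (1 - s) ^ (q - 1)) / (q - 1) := by
    intro s
    rw [show (∫ l in (0:ℝ)..s, (1 - l) ^ (q - 2))
        = ∫ l in (0:ℝ)..s, (fun u : ℝ => u ^ (q - 2)) (1 - l) from rfl,
      intervalIntegral.integral_comp_sub_left (fun u : ℝ => u ^ (q - 2)) 1,
      integral_rpow (Or.inl (by linarith : (-1:ℝ) < q - 2)),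
      show q - 2 + 1 = q - 1 by ring, sub_zero, Real.one_rpow]
  have hcont : Continuous (fun s : ℝ => (1 - s) ^ (q - 1)) := by
    have : Continuous (fun u : ℝ => u ^ (q - 1)) := by
      rw [continuous_iff_continuousAt]
      intro x
      exact Real.continuousAt_rpow_const x (q - 1) (Or.inr (by linarith))
    exact this.comp (continuous_const.sub continuous_id)
  have hB : B = 1 / q := by
    show (∫ s in (0:ℝ)..1, ∫ l in (0:ℝ)..s, (1 - l) ^ (q - 2)) = _
    simp_rw [innerB]
    rw [intervalIntegral.integral_div, intervalIntegral.integral_sub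
      (intervalIntegrable_const) (hcont.intervalIntegrable 0 1)]
    rw [show (∫ s in (0:ℝ)..1, (1 - s) ^ (q - 1))
        = ∫ s in (0:ℝ)..1, (fun u : ℝ => u ^ (q - 1)) (1 - s) from rfl,
      intervalIntegral.integral_comp_sub_left (fun u : ℝ => u ^ (q - 1)) 1,
      integral_rpow (Or.inl (by linarith : (-1:ℝ) < q - 1)),
      show q - 1 + 1 = q by ring]
    norm_num [Real.zero_rpow (show q ≠ 0 by linarith)]
    field_simp
  have hmin : min A B = A := by
    apply min_eq_left
    rw [hA, hB]
    rw [div_le_div_iff₀ (by positivity) hq0]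
    nlinarith
  have hc : (q - 1) * min A B = 1 / q := by
    rw [hmin, hA]
    field_simp
  rw [hc]
  constructor
  · positivity
  · -- main inequality
    rcases le_total hb h with hcase | hcase
    · have key := case1 q hq hb hhb (h - hb) (by linarith)
      rw [show hb + (h - hb) = h by ring] at key
      rw [abs_of_nonneg (by linarith : (0:ℝ) ≤ h - hb)]
      rw [ge_iff_le, div_mul_eq_mul_div, one_mul, div_le_iff₀ hq0]
      calc (h - hb) ^ q ≤ h ^ q - hb ^ q - q * hb ^ (q - 1) * (h - hb) := key
        _ = (1 / q * (h ^ q - hb ^ q) - hb ^ (q - 1) * (h - hb)) * q := by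
            field_simp
    · have key := case2 q hq hb (hb - h) (by linarith) (by linarith)
      rw [show hb - (hb - h) = h by ring] at key
      rw [abs_of_nonpos (by linarith : h - hb ≤ 0), show -(h - hb) = hb - h by ring]
      rw [ge_iff_le, div_mul_eq_mul_div, one_mul, div_le_iff₀ hq0]
      calc (hb - h) ^ q ≤ h ^ q - hb ^ q + q * hb ^ (q - 1) * (hb - h) := key
        _ = (1 / q * (h ^ q - hb ^ q) - hb ^ (q - 1) * (h - hb)) * q := by
            field_simp; ring
end

section
/- Let 1 < q < 2, L > 0, and let h, h̄ be nonnegative reals with h̄ ≤ L. If h > 3L, then the Taylor remainder satisfies (1/q)(h^q - h̄^q) - h̄^{q-1}(h-h̄) ≥ (q-1)·(1/2)^{2-q}·∫₀¹∫₀ˢ dλ ds · (h - h̄)^q = ((q-1)/2)·(1/2)^{2-q}·(h-h̄)^q. Moreover if h ≤ 3L, then the remainder is ≥ ((q-1)/2)·(3L)^{q-2}·(h-h̄)². -/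
/-!
Subtracting `c t² / 2` with `c = (q - 1) M^(q - 2)` leaves `t ↦ t^q / q` convex on `[0, M]`,
because its second derivative `(q - 1) t^(q - 2)` is at least `c` there (`q - 2 ≤ 0`). The tangent
line inequality for that convex function is exactly `R(a, b) ≥ c (a - b)² / 2`, where `R` is the
Taylor remainder of `t^q / q` at `b`; taking `M = 3L` gives the case `h ≤ 3L`.
If `h > 3L ≥ 3h̄`, take `M = h` instead: then `h ≤ 2 (h - h̄)`, so
`h^(q - 2) (h - h̄)² ≥ (2 (h - h̄))^(q - 2) (h - h̄)² = (1/2)^(2 - q) (h - h̄)^q`.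
-/

open Real Set

lemma ConvexOn.add_mul_sub_le_of_hasDerivAt {S : Set ℝ} {f : ℝ → ℝ} {f' x y : ℝ}
    (hf : ConvexOn ℝ S f) (hx : x ∈ S) (hy : y ∈ S) (hf' : HasDerivAt f f' y) :
    f y + f' * (x - y) ≤ f x := by
  rcases lt_trichotomy x y with hxy | rfl | hxy
  · have hslope := hf.slope_le_of_hasDerivAt hx hy hxy hf'
    rw [slope_def_field, div_le_iff₀ (sub_pos.mpr hxy)] at hslope
    linarith
  · simp
  · have hslope := hf.le_slope_of_hasDerivAt hy hx hxy hf'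
    rw [slope_def_field, le_div_iff₀ (sub_pos.mpr hxy)] at hslope
    linarith

lemma hasDerivAt_rpow_div_self {q : ℝ} (hq : 1 ≤ q) (x : ℝ) :
    HasDerivAt (fun t => t ^ q / q) (x ^ (q - 1)) x :=
  ((hasDerivAt_rpow_const (Or.inr hq)).div_const q).congr_deriv (by field_simp)

lemma hasDerivAt_rpow_div_self_sub_mul_sq {q : ℝ} (hq : 1 ≤ q) (c x : ℝ) :
    HasDerivAt (fun t => t ^ q / q - c / 2 * t ^ 2) (x ^ (q - 1) - c * x) x :=
  ((hasDerivAt_rpow_div_self hq x).sub ((hasDerivAt_pow 2 x).const_mul (c / 2))).congr_deriv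
    (by ring)

lemma convexOn_rpow_div_self_sub_mul_sq {q M : ℝ} (hq1 : 1 ≤ q) (hq2 : q ≤ 2) :
    ConvexOn ℝ (Icc 0 M) (fun t => t ^ q / q - (q - 1) * M ^ (q - 2) / 2 * t ^ 2) := by
  set c := (q - 1) * M ^ (q - 2)
  refine convexOn_of_hasDerivWithinAt2_nonneg (convex_Icc 0 M)
    (f' := fun x => x ^ (q - 1) - c * x) (f'' := fun x => (q - 1) * x ^ (q - 2) - c)
    (fun x _ => (hasDerivAt_rpow_div_self_sub_mul_sq hq1 c x).continuousAt.continuousWithinAt)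
    (fun x _ => (hasDerivAt_rpow_div_self_sub_mul_sq hq1 c x).hasDerivWithinAt) ?_ ?_
  · intro x hx
    rw [interior_Icc] at hx
    exact ((hasDerivAt_rpow_const (Or.inl hx.1.ne')).sub ((hasDerivAt_id x).const_mul c))
      |>.congr_deriv (by rw [sub_sub, one_add_one_eq_two, mul_one]) |>.hasDerivWithinAt
  · intro x hx
    rw [interior_Icc] at hx
    have hpow : M ^ (q - 2) ≤ x ^ (q - 2) := rpow_le_rpow_of_nonpos hx.1 hx.2.le (by linarith)
    have := mul_le_mul_of_nonneg_left hpow (by linarith : 0 ≤ q - 1)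
    simp only [c]
    linarith

theorem mul_sq_le_rpow_taylor_remainder {q M a b : ℝ} (hq1 : 1 ≤ q) (hq2 : q ≤ 2)
    (ha : a ∈ Icc 0 M) (hb : b ∈ Icc 0 M) :
    (q - 1) / 2 * M ^ (q - 2) * (a - b) ^ 2 ≤ 1 / q * (a ^ q - b ^ q) - b ^ (q - 1) * (a - b) := by
  have htangent := (convexOn_rpow_div_self_sub_mul_sq (M := M) hq1 hq2)
    |>.add_mul_sub_le_of_hasDerivAt ha hb (hasDerivAt_rpow_div_self_sub_mul_sq hq1 _ b)
  linear_combination htangent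

theorem mul_rpow_le_rpow_taylor_remainder {q a b : ℝ} (hq1 : 1 ≤ q) (hq2 : q ≤ 2)
    (hb : 0 ≤ b) (hba : 2 * b ≤ a) :
    (q - 1) / 2 * (1 / 2) ^ (2 - q) * (a - b) ^ q
      ≤ 1 / q * (a ^ q - b ^ q) - b ^ (q - 1) * (a - b) := by
  obtain rfl | ha := (show 0 ≤ a by linarith).eq_or_lt
  · obtain rfl : b = 0 := by linarith
    simp [zero_rpow (by linarith : q ≠ 0)]
  have hd : 0 < a - b := by linarith
  have hrem := mul_sq_le_rpow_taylor_remainder hq1 hq2 ⟨ha.le, le_rfl⟩ ⟨hb, by linarith⟩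
  have hpow : (2 * (a - b)) ^ (q - 2) ≤ a ^ (q - 2) :=
    rpow_le_rpow_of_nonpos ha (by linarith) (by linarith)
  have hsplit :
      (1 / 2 : ℝ) ^ (2 - q) * (a - b) ^ q = (2 * (a - b)) ^ (q - 2) * (a - b) ^ 2 := by
    rw [mul_rpow zero_le_two hd.le, one_div, inv_rpow zero_le_two, ← rpow_neg zero_le_two,
      neg_sub, mul_assoc, ← rpow_natCast, ← rpow_add hd]
    norm_num
  calc (q - 1) / 2 * (1 / 2) ^ (2 - q) * (a - b) ^ q
      = (q - 1) / 2 * (2 * (a - b)) ^ (q - 2) * (a - b) ^ 2 := by rw [mul_assoc, hsplit, mul_assoc]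
    _ ≤ (q - 1) / 2 * a ^ (q - 2) * (a - b) ^ 2 := by gcongr
    _ ≤ _ := hrem

theorem stmt_4_general (q L h hb : ℝ) (hq1 : 1 < q) (hq2 : q < 2)
    (hh : 0 ≤ h) (hhb : 0 ≤ hb) (hbL : hb ≤ L) :
    (h > 3 * L →
      (1 / q) * (h ^ q - hb ^ q) - hb ^ (q - 1) * (h - hb)
        ≥ ((q - 1) / 2) * (1 / 2 : ℝ) ^ (2 - q) * (h - hb) ^ q) ∧
    (h ≤ 3 * L →
      (1 / q) * (h ^ q - hb ^ q) - hb ^ (q - 1) * (h - hb)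
        ≥ ((q - 1) / 2) * (3 * L) ^ (q - 2) * (h - hb) ^ 2) :=
  ⟨fun h3L => mul_rpow_le_rpow_taylor_remainder hq1.le hq2.le hhb (by linarith),
    fun h3L => mul_sq_le_rpow_taylor_remainder hq1.le hq2.le ⟨hh, h3L⟩ ⟨hhb, by linarith⟩⟩

/-- Lower bounds on the Taylor remainder of `t ↦ t^q/q`, `1 < q < 2`, at `h̄ ≤ L`,
split according to whether `h > 3L` or `h ≤ 3L`. -/
theorem stmt_4 (q L h hb : ℝ) (hq1 : 1 < q) (hq2 : q < 2) (hL : 0 < L)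
    (hh : 0 ≤ h) (hhb : 0 ≤ hb) (hbL : hb ≤ L) :
    (h > 3 * L →
      (1 / q) * (h ^ q - hb ^ q) - hb ^ (q - 1) * (h - hb)
        ≥ ((q - 1) / 2) * (1 / 2 : ℝ) ^ (2 - q) * (h - hb) ^ q) ∧
    (h ≤ 3 * L →
      (1 / q) * (h ^ q - hb ^ q) - hb ^ (q - 1) * (h - hb)
        ≥ ((q - 1) / 2) * (3 * L) ^ (q - 2) * (h - hb) ^ 2) :=
  stmt_4_general q L h hb hq1 hq2 hh hhb hbL
end

section
/- Let N ≥ 1, let M₁,...,M_N > 0, let U : (ℝ^d)^N → ℝ be twice continuously differentiable, and let (q_i(t), p_i(t)) and (q̄_i(t), p̄_i(t)) be two C¹ solutions of Hamilton's equations q̇_i = p_i/M_i, ṗ_i = -∂_{q_i}U(q), with Hamiltonian H(q,p) = Σᵢ |p_i|²/(2M_i) + U(q). Define the relative Hamiltonian H_rel(t) = Σᵢ |p_i - p̄_i|²/(2M_i) + U(q) - U(q̄) - Σ_k ∂_{q_k}U(q̄)·(q_k - q̄_k). Then d/dt H_rel(t) = -Σ_k q̄̇_k · ( -∂_{q_k}U(q)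 + ∂_{q_k}U(q̄) + Σ_ℓ ∂_{q_ℓ}∂_{q_k}U(q̄)(q_ℓ - q̄_ℓ) ). -/
open InnerProductSpace
open scoped RealInnerProductSpace

/-!
Along the two trajectories the kinetic part of the relative Hamiltonian changes at the rate
`⟪q̇ - q̄̇, -(∇U(q) - ∇U(q̄))⟫`, while the relative potential
`U(q) - U(q̄) - ⟪∇U(q̄), q - q̄⟫` changes at the rate `⟪∇U(q) - ∇U(q̄), q̇⟫ - ⟪q̄̇, D²U(q̄)(q - q̄)⟫`,
the Hessian having been moved onto `q̄̇` by its symmetry. The `q̇` terms cancel in the sum.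
-/

section Gradient

variable {E : Type*} [NormedAddCommGroup E] [InnerProductSpace ℝ E] [CompleteSpace E]
  {U : E → ℝ} {x : E}

theorem fderiv_gradient_apply (u : E) :
    fderiv ℝ (gradient U) x u = (toDual ℝ E).symm (fderiv ℝ (fderiv ℝ U) x u) := by
  have hgradient : gradient U = (toDual ℝ E).symm ∘ fderiv ℝ U := rfl
  rw [hgradient, LinearIsometryEquiv.comp_fderiv]
  rfl

theorem inner_fderiv_gradient (u w : E) :
    ⟪fderiv ℝ (gradient U) x u, w⟫ = fderiv ℝ (fderiv ℝ U) x u w := by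
  rw [fderiv_gradient_apply, toDual_symm_apply]

theorem ContDiffAt.inner_fderiv_gradient_comm (hU : ContDiffAt ℝ 2 U x) (u w : E) :
    ⟪fderiv ℝ (gradient U) x u, w⟫ = ⟪u, fderiv ℝ (gradient U) x w⟫ := by
  rw [real_inner_comm _ u, inner_fderiv_gradient, inner_fderiv_gradient]
  exact hU.isSymmSndFDerivAt (by simp) u w

variable {q qb : ℝ → E} {v vb : E} {t : ℝ}

theorem HasDerivAt.comp_inner_gradient (hU : DifferentiableAt ℝ U (q t))
    (hq : HasDerivAt q v t) :
    HasDerivAt (fun s => U (q s)) ⟪gradient U (q t), v⟫ t := by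
  simpa [toDual_apply_apply, Function.comp_def] using
    hU.hasGradientAt.hasFDerivAt.comp_hasDerivAt t hq

theorem hasDerivAt_relativePotential (hU : ContDiff ℝ 2 U) (hq : HasDerivAt q v t)
    (hqb : HasDerivAt qb vb t) :
    HasDerivAt (fun s => U (q s) - U (qb s) - ⟪gradient U (qb s), q s - qb s⟫)
      (⟪gradient U (q t) - gradient U (qb t), v⟫
        - ⟪vb, fderiv ℝ (gradient U) (qb t) (q t - qb t)⟫) t := by
  have hUd : Differentiable ℝ U := hU.differentiable (by norm_num)
  have hgradient : Differentiable ℝ (gradient U) :=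
    (toDual ℝ E).symm.differentiable.comp
      ((hU.fderiv_right (m := 1) le_rfl).differentiable one_ne_zero)
  have hlinear := (hgradient (qb t)).hasFDerivAt.comp_hasDerivAt t hqb |>.inner ℝ (hq.sub hqb)
  refine (((hq.comp_inner_gradient (hUd _)).sub
    (hqb.comp_inner_gradient (hUd _))).sub hlinear).congr_deriv ?_
  rw [hU.contDiffAt.inner_fderiv_gradient_comm]
  simp only [Function.comp_apply, Pi.sub_apply, inner_sub_left, inner_sub_right]
  ring

end Gradient

theorem hasDerivAt_sum_inv_two_mul_sq {ι : Type*} [Fintype ι] (m : ι → ℝ)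
    {p : ℝ → EuclideanSpace ℝ ι} {p' : EuclideanSpace ℝ ι} {t : ℝ} (hp : HasDerivAt p p' t) :
    HasDerivAt (fun s => ∑ i, (2 * m i)⁻¹ * p s i ^ 2)
      ⟪(WithLp.toLp 2 (fun i => (m i)⁻¹ * p t i) : EuclideanSpace ℝ ι), p'⟫ t := by
  have hcoord (i : ι) : HasDerivAt (fun s => p s i) (p' i) t :=
    (EuclideanSpace.proj (𝕜 := ℝ) i).hasFDerivAt.comp_hasDerivAt t hp
  refine (HasDerivAt.fun_sum fun i _ => ((hcoord i).pow 2).const_mul _).congr_deriv ?_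
  rw [PiLp.inner_apply]
  refine Finset.sum_congr rfl fun i _ => ?_
  simp only [RCLike.inner_apply, conj_trivial, mul_inv]
  ring

theorem stmt_9_general (d N : ℕ) (M : Fin N → ℝ)
    (U : EuclideanSpace ℝ (Fin N × Fin d) → ℝ) (hU : ContDiff ℝ 2 U)
    (Q P Qb Pb : ℝ → EuclideanSpace ℝ (Fin N × Fin d))
    (hQ : ∀ t, HasDerivAt Q
      ((WithLp.toLp 2 (fun ij => (M ij.1)⁻¹ * P t ij) : EuclideanSpace ℝ (Fin N × Fin d))) t)
    (hP : ∀ t, HasDerivAt P (-(gradient U (Q t))) t)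
    (hQb : ∀ t, HasDerivAt Qb
      ((WithLp.toLp 2 (fun ij => (M ij.1)⁻¹ * Pb t ij) : EuclideanSpace ℝ (Fin N × Fin d))) t)
    (hPb : ∀ t, HasDerivAt Pb (-(gradient U (Qb t))) t) :
    ∀ t : ℝ,
      HasDerivAt
        (fun s => (∑ ij : Fin N × Fin d, (2 * M ij.1)⁻¹ * (P s ij - Pb s ij) ^ 2)
          + U (Q s) - U (Qb s) - ⟪gradient U (Qb s), Q s - Qb s⟫)
        (-⟪(show EuclideanSpace ℝ (Fin N × Fin d) from WithLp.toLp 2 (fun ij => (M ij.1)⁻¹ * Pb t ij)),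
            -gradient U (Q t) + gradient U (Qb t)
              + (fderiv ℝ (gradient U) (Qb t)) (Q t - Qb t)⟫)
        t := by
  intro t
  have hpotential := hasDerivAt_relativePotential hU (hQ t) (hQb t)
  set V : EuclideanSpace ℝ (Fin N × Fin d) := WithLp.toLp 2 (fun ij => (M ij.1)⁻¹ * P t ij)
  set Vb : EuclideanSpace ℝ (Fin N × Fin d) := WithLp.toLp 2 (fun ij => (M ij.1)⁻¹ * Pb t ij)
  have hkinetic := hasDerivAt_sum_inv_two_mul_sq (fun ij => M ij.1)
    (p := fun s => P s - Pb s) ((hP t).sub (hPb t))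
  have hrelativeVelocity : (WithLp.toLp 2 (fun ij => (M ij.1)⁻¹ * (P t - Pb t) ij)
      : EuclideanSpace ℝ (Fin N × Fin d)) = V - Vb := by
    ext ij
    simp only [V, Vb, PiLp.sub_apply]
    ring
  rw [hrelativeVelocity] at hkinetic
  simp only [add_sub_assoc]
  refine (hkinetic.add hpotential).congr_deriv ?_
  simp only [inner_add_right, inner_sub_left, inner_sub_right, inner_neg_right, real_inner_comm V]
  ring

/-- Relative Hamiltonian identity for classical `N`-particle mechanics: for two `C¹` solutions
of Hamilton's equations with Hamiltonian `H(q,p) = Σᵢ |pᵢ|²/(2Mᵢ) + U(q)`, the time derivative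
of the relative Hamiltonian is minus the sum of relative work rates. -/
theorem stmt_9 (d N : ℕ) (hN : 1 ≤ N) (M : Fin N → ℝ) (hM : ∀ i, 0 < M i)
    (U : EuclideanSpace ℝ (Fin N × Fin d) → ℝ) (hU : ContDiff ℝ 2 U)
    (Q P Qb Pb : ℝ → EuclideanSpace ℝ (Fin N × Fin d))
    (hQ : ∀ t, HasDerivAt Q
      ((WithLp.toLp 2 (fun ij => (M ij.1)⁻¹ * P t ij) : EuclideanSpace ℝ (Fin N × Fin d))) t)
    (hP : ∀ t, HasDerivAt P (-(gradient U (Q t))) t)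
    (hQb : ∀ t, HasDerivAt Qb
      ((WithLp.toLp 2 (fun ij => (M ij.1)⁻¹ * Pb t ij) : EuclideanSpace ℝ (Fin N × Fin d))) t)
    (hPb : ∀ t, HasDerivAt Pb (-(gradient U (Qb t))) t) :
    ∀ t : ℝ,
      HasDerivAt
        (fun s => (∑ ij : Fin N × Fin d, (2 * M ij.1)⁻¹ * (P s ij - Pb s ij) ^ 2)
          + U (Q s) - U (Qb s) - ⟪gradient U (Qb s), Q s - Qb s⟫)
        (-⟪(show EuclideanSpace ℝ (Fin N × Fin d) from WithLp.toLp 2 (fun ij => (M ij.1)⁻¹ * Pb t ij)),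
            -gradient U (Q t) + gradient U (Qb t)
              + (fderiv ℝ (gradient U) (Qb t)) (Q t - Qb t)⟫)
        t :=
  stmt_9_general d N M U hU Q P Qb Pb hQ hP hQb hPb
end

section
/- Let η, η*, : ℝ → ℝ be increasing bijections with η and η⁻¹ Lipschitz, likewise η* and η*⁻¹, and let 1 < q. Then for all x ≠ x': |η(x)-η(x')-η*(x)+η*(x')| · |x-x'|^{q-1} ≤ max{Lip(η⁻¹), Lip(η*⁻¹)}^{q-1} · |(1/q)|η(x)-η(x')|^q - (1/q)|η*(x)-η*(x')|^q|. -/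
/-!
Since `s ↦ s ^ q / q` has the increasing derivative `s ^ (q - 1)` on `[0, ∞)` when `q ≥ 1`, the
mean value theorem gives `|a ^ q / q - b ^ q / q| ≥ min a b ^ (q - 1) * |a - b|` for `a, b ≥ 0`.
Take `a = |η x - η x'|` and `b = |η* x - η* x'|`. The two increments have the same sign by
monotonicity, so their difference has absolute value `|a - b|`, and the anti-Lipschitz bounds give
`min a b ≥ |x - x'| / max Cη Cη*`.
-/

theorem rpow_sub_one_mul_sub_le {q m a b : ℝ} (hq : 1 ≤ q) (hm : 0 ≤ m) (hmb : m ≤ b)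
    (hba : b ≤ a) : m ^ (q - 1) * (a - b) ≤ a ^ q / q - b ^ q / q := by
  have hq0 : q ≠ 0 := by positivity
  have hderiv : ∀ x, 0 < x → HasDerivAt (fun y : ℝ => y ^ q / q) (x ^ (q - 1)) x := fun x hx => by
    simpa [hq0] using (Real.hasDerivAt_rpow_const (p := q) (Or.inl hx.ne')).div_const q
  refine (convex_Ici m).mul_sub_le_image_sub_of_le_deriv
    (fun x _ => ((Real.continuousAt_rpow_const x q (Or.inr (by linarith))).div_const
      q).continuousWithinAt)
    (fun x hx => ?_) (fun x hx => ?_) b hmb a (hmb.trans hba) hba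
  · rw [interior_Ici] at hx
    exact (hderiv x (hm.trans_lt hx)).differentiableAt.differentiableWithinAt
  · rw [interior_Ici] at hx
    rw [(hderiv x (hm.trans_lt hx)).deriv]
    exact Real.rpow_le_rpow hm hx.le (by linarith)

theorem rpow_sub_one_mul_abs_sub_le {q m a b : ℝ} (hq : 1 ≤ q) (hm : 0 ≤ m) (hma : m ≤ a)
    (hmb : m ≤ b) : m ^ (q - 1) * |a - b| ≤ |a ^ q / q - b ^ q / q| := by
  rcases le_total b a with hba | hab
  · rw [abs_of_nonneg (sub_nonneg.2 hba)]
    exact (rpow_sub_one_mul_sub_le hq hm hmb hba).trans (le_abs_self _)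
  · rw [abs_sub_comm, abs_sub_comm (a ^ q / q), abs_of_nonneg (sub_nonneg.2 hab)]
    exact (rpow_sub_one_mul_sub_le hq hm hma hab).trans (le_abs_self _)

theorem abs_sub_mul_rpow_sub_one_le {q C t a b : ℝ} (hq : 1 ≤ q) (hC : 0 ≤ C) (ht : 0 < t)
    (hta : t ≤ C * a) (htb : t ≤ C * b) :
    |a - b| * t ^ (q - 1) ≤ C ^ (q - 1) * |a ^ q / q - b ^ q / q| := by
  have hC : 0 < C := hC.lt_of_ne (by rintro rfl; linarith)
  have key := rpow_sub_one_mul_abs_sub_le hq (div_nonneg ht.le hC.le)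
    ((div_le_iff₀' hC).2 hta) ((div_le_iff₀' hC).2 htb)
  rw [Real.div_rpow ht.le hC.le, div_mul_eq_mul_div, div_le_iff₀' (by positivity)] at key
  linarith

theorem Monotone.abs_sub_sub_eq_abs_abs_sub_abs {f g : ℝ → ℝ} (hf : Monotone f)
    (hg : Monotone g) (x x' : ℝ) :
    |f x - f x' - (g x - g x')| = |(|f x - f x'| - |g x - g x'|)| := by
  rcases le_total x x' with h | h
  · rw [abs_of_nonpos (sub_nonpos.2 (hf h)), abs_of_nonpos (sub_nonpos.2 (hg h)), neg_sub_neg,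
      abs_sub_comm]
  · rw [abs_of_nonneg (sub_nonneg.2 (hf h)), abs_of_nonneg (sub_nonneg.2 (hg h))]

theorem stmt_10_general (η ηs : ℝ → ℝ) (q : ℝ) (hq : 1 < q)
    (hmη : Monotone η) (hmηs : Monotone ηs)
    (Cη Cηs : NNReal)
    (hCη : AntilipschitzWith Cη η) (hCηs : AntilipschitzWith Cηs ηs) :
    ∀ x x' : ℝ, x ≠ x' →
      |η x - η x' - ηs x + ηs x'| * |x - x'| ^ (q - 1)
        ≤ (max (Cη : ℝ) (Cηs : ℝ)) ^ (q - 1) *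
            |(1 / q) * |η x - η x'| ^ q - (1 / q) * |ηs x - ηs x'| ^ q| := by
  intro x x' hne
  have hdist : ∀ {C : NNReal} {f : ℝ → ℝ}, AntilipschitzWith C f → (C : ℝ) ≤ max (Cη : ℝ) Cηs →
      |x - x'| ≤ max (Cη : ℝ) Cηs * |f x - f x'| := fun hf hC => by
    simpa only [Real.dist_eq] using
      (hf.le_mul_dist x x').trans (mul_le_mul_of_nonneg_right hC dist_nonneg)
  rw [sub_add, hmη.abs_sub_sub_eq_abs_abs_sub_abs hmηs, one_div_mul_eq_div, one_div_mul_eq_div]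
  exact abs_sub_mul_rpow_sub_one_le hq.le (by positivity) (abs_pos.2 (sub_ne_zero.2 hne))
    (hdist hCη (le_max_left ..)) (hdist hCηs (le_max_right ..))

/-- For increasing bi-Lipschitz bijections `η, η*` and `q > 1`, the difference of increments
weighted by `|x-x'|^{q-1}` is bounded by the difference of the `q`-th power kernels, with
constant `max{Lip(η⁻¹), Lip(η*⁻¹)}^{q-1}`. Here `AntilipschitzWith C η` expresses that
`η⁻¹` is `C`-Lipschitz. -/
theorem stmt_10 (η ηs : ℝ → ℝ) (q : ℝ) (hq : 1 < q)
    (hmη : Monotone η) (hmηs : Monotone ηs)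
    (hbη : Function.Bijective η) (hbηs : Function.Bijective ηs)
    (Lη Lηs Cη Cηs : NNReal)
    (hLη : LipschitzWith Lη η) (hLηs : LipschitzWith Lηs ηs)
    (hCη : AntilipschitzWith Cη η) (hCηs : AntilipschitzWith Cηs ηs) :
    ∀ x x' : ℝ, x ≠ x' →
      |η x - η x' - ηs x + ηs x'| * |x - x'| ^ (q - 1)
        ≤ (max (Cη : ℝ) (Cηs : ℝ)) ^ (q - 1) *
            |(1 / q) * |η x - η x'| ^ q - (1 / q) * |ηs x - ηs x'| ^ q| :=
  stmt_10_general η ηs q hq hmη hmηs Cη Cηs hCη hCηs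
end

section
/- Let η, η* : ℝ → ℝ be increasing maps that are Lipschitz, and let -1 < p < 1, p ≠ 0. Then for all x ≠ x' with η(x) ≠ η(x') and η*(x) ≠ η*(x'): |η(x)-η(x')-η*(x)+η*(x')| · |x-x'|^{p-1} ≤ max{Lip(η), Lip(η*)}^{1-p} · |(1/p)|η(x)-η(x')|^p - (1/p)|η*(x)-η*(x')|^p|. -/
open Real

/-- Mean-value estimate: for `0 < u ≤ v ≤ K` and `p < 1`, `p ≠ 0`,
`K^(p-1) * (v-u) ≤ v^p/p - u^p/p`. -/
lemma key_mono (p : ℝ) (hp2 : p < 1) (hp0 : p ≠ 0) {u v K : ℝ} (hu : 0 < u)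
    (huv : u ≤ v) (hvK : v ≤ K) :
    K ^ (p - 1) * (v - u) ≤ v ^ p / p - u ^ p / p := by
  set g : ℝ → ℝ := fun t => t ^ p / p - K ^ (p - 1) * t with hg
  have hmono : MonotoneOn g (Set.Icc u K) := by
    have hcont : ContinuousOn g (Set.Icc u K) := by
      intro t ht
      have ht0 : t ≠ 0 := (lt_of_lt_of_le hu ht.1).ne'
      exact (((Real.continuousAt_rpow_const t p (Or.inl ht0)).div_const p).sub
        ((continuous_const.mul continuous_id).continuousAt)).continuousWithinAt
    have hderiv : ∀ t ∈ interior (Set.Icc u K), 0 ≤ deriv g t := by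
      intro t ht
      rw [interior_Icc] at ht
      have ht0 : 0 < t := lt_trans hu ht.1
      have h1 : HasDerivAt (fun s : ℝ => s ^ p) (p * t ^ (p - 1)) t :=
        Real.hasDerivAt_rpow_const (Or.inl ht0.ne')
      have h2 : HasDerivAt g (p * t ^ (p - 1) / p - K ^ (p - 1) * 1) t :=
        (h1.div_const p).sub ((hasDerivAt_id t).const_mul (K ^ (p - 1)))
      rw [h2.deriv]
      have : p * t ^ (p - 1) / p = t ^ (p - 1) := by field_simp
      rw [this, mul_one, sub_nonneg]
      exact Real.rpow_le_rpow_of_nonpos ht0 (le_of_lt ht.2) (by linarith)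
    have hdiff : DifferentiableOn ℝ g (interior (Set.Icc u K)) := by
      intro t ht
      rw [interior_Icc] at ht
      have ht0 : 0 < t := lt_trans hu ht.1
      have h1 : HasDerivAt (fun s : ℝ => s ^ p) (p * t ^ (p - 1)) t :=
        Real.hasDerivAt_rpow_const (Or.inl ht0.ne')
      exact (((h1.div_const p).sub
        ((hasDerivAt_id t).const_mul (K ^ (p - 1)))).differentiableAt).differentiableWithinAt
    exact monotoneOn_of_deriv_nonneg (convex_Icc u K) hcont hdiff hderiv
  have hgu : g u ≤ g v :=
    hmono ⟨le_refl u, le_trans huv hvK⟩ ⟨huv, hvK⟩ huv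
  simp only [hg] at hgu
  linarith

theorem key_half (η ηs : ℝ → ℝ) (p : ℝ) (hp2 : p < 1) (hp0 : p ≠ 0)
    (M d a b : ℝ) (hd : 0 < d) (ha : 0 < a) (hb : 0 < b)
    (haM : a ≤ M * d) (hbM : b ≤ M * d) (hba : b ≤ a) :
    |a - b| * d ^ (p - 1) ≤ M ^ (1 - p) * |a ^ p / p - b ^ p / p| := by
  have hM : 0 < M := by
    by_contra h
    push_neg at h
    nlinarith
  have hkey := key_mono p hp2 hp0 hb hba haM
  have hab : b ^ p / p ≤ a ^ p / p := by
    have hpos : 0 ≤ (M * d) ^ (p - 1) * (a - b) :=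
      mul_nonneg (Real.rpow_nonneg (by positivity) _) (by linarith)
    linarith
  rw [abs_of_nonneg (by linarith), abs_of_nonneg (by linarith)]
  have hMd : (M * d) ^ (p - 1) = M ^ (p - 1) * d ^ (p - 1) :=
    Real.mul_rpow hM.le hd.le
  rw [hMd] at hkey
  have hM1 : M ^ (1 - p) * M ^ (p - 1) = 1 := by
    rw [← Real.rpow_add hM]; norm_num
  calc (a - b) * d ^ (p - 1)
      = M ^ (1 - p) * (M ^ (p - 1) * d ^ (p - 1) * (a - b)) := by
        rw [← mul_assoc, ← mul_assoc, hM1]; ring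
    _ ≤ M ^ (1 - p) * (a ^ p / p - b ^ p / p) := by
        apply mul_le_mul_of_nonneg_left hkey (Real.rpow_nonneg hM.le _)

theorem key_sym (η ηs : ℝ → ℝ) (p : ℝ) (hp2 : p < 1) (hp0 : p ≠ 0)
    (M d a b : ℝ) (hd : 0 < d) (ha : 0 < a) (hb : 0 < b)
    (haM : a ≤ M * d) (hbM : b ≤ M * d) :
    |a - b| * d ^ (p - 1) ≤ M ^ (1 - p) * |a ^ p / p - b ^ p / p| := by
  rcases le_total b a with h | h
  · exact key_half η ηs p hp2 hp0 M d a b hd ha hb haM hbM h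
  · have := key_half η ηs p hp2 hp0 M d b a hd hb ha hbM haM h
    rwa [abs_sub_comm, abs_sub_comm (b^p/p)] at this

/-- For increasing Lipschitz maps `η, η*` and `-1 < p < 1`, `p ≠ 0`, the difference of
increments weighted by `|x-x'|^{p-1}` is bounded by the difference of the `p`-th power kernels,
with constant `max{Lip(η), Lip(η*)}^{1-p}`. -/
theorem stmt_11 (η ηs : ℝ → ℝ) (p : ℝ) (hp1 : -1 < p) (hp2 : p < 1) (hp0 : p ≠ 0)
    (hmη : Monotone η) (hmηs : Monotone ηs)
    (Lη Lηs : NNReal) (hLη : LipschitzWith Lη η) (hLηs : LipschitzWith Lηs ηs) :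
    ∀ x x' : ℝ, x ≠ x' → η x ≠ η x' → ηs x ≠ ηs x' →
      |η x - η x' - ηs x + ηs x'| * |x - x'| ^ (p - 1)
        ≤ (max (Lη : ℝ) (Lηs : ℝ)) ^ (1 - p) *
            |(1 / p) * |η x - η x'| ^ p - (1 / p) * |ηs x - ηs x'| ^ p| := by
  have main : ∀ x x' : ℝ, x' < x → η x ≠ η x' → ηs x ≠ ηs x' →
      |η x - η x' - ηs x + ηs x'| * |x - x'| ^ (p - 1)
        ≤ (max (Lη : ℝ) (Lηs : ℝ)) ^ (1 - p) *
            |(1 / p) * |η x - η x'| ^ p - (1 / p) * |ηs x - ηs x'| ^ p| := by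
    intro x x' hlt hne hnes
    set M : ℝ := max (Lη : ℝ) (Lηs : ℝ) with hM
    set d : ℝ := x - x' with hdd
    have hd : 0 < d := sub_pos.mpr hlt
    have ha : 0 < η x - η x' := sub_pos.mpr (lt_of_le_of_ne (hmη hlt.le) (Ne.symm hne))
    have hb : 0 < ηs x - ηs x' := sub_pos.mpr (lt_of_le_of_ne (hmηs hlt.le) (Ne.symm hnes))
    have haM : η x - η x' ≤ M * d := by
      have := hLη.dist_le_mul x x'
      rw [Real.dist_eq, Real.dist_eq, abs_of_pos ha, abs_of_pos hd] at this
      exact le_trans this (by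
        apply mul_le_mul_of_nonneg_right (le_max_left _ _) hd.le)
    have hbM : ηs x - ηs x' ≤ M * d := by
      have := hLηs.dist_le_mul x x'
      rw [Real.dist_eq, Real.dist_eq, abs_of_pos hb, abs_of_pos hd] at this
      exact le_trans this (by
        apply mul_le_mul_of_nonneg_right (le_max_right _ _) hd.le)
    have hkey := key_sym η ηs p hp2 hp0 M d (η x - η x') (ηs x - ηs x') hd ha hb haM hbM
    have e1 : η x - η x' - ηs x + ηs x' = (η x - η x') - (ηs x - ηs x') := by ring
    have e2 : |x - x'| = d := abs_of_pos hd
    have e3 : |η x - η x'| = η x - η x' := abs_of_pos ha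
    have e4 : |ηs x - ηs x'| = ηs x - ηs x' := abs_of_pos hb
    rw [e1, e2, e3, e4]
    calc _ ≤ M ^ (1 - p) * |(η x - η x') ^ p / p - (ηs x - ηs x') ^ p / p| := hkey
      _ = _ := by
        rw [show (η x - η x') ^ p / p - (ηs x - ηs x') ^ p / p
          = 1 / p * (η x - η x') ^ p - 1 / p * (ηs x - ηs x') ^ p from by ring]
  intro x x' hxx hne hnes
  rcases lt_or_gt_of_ne hxx with h | h
  · have := main x' x h (Ne.symm hne) (Ne.symm hnes)
    have e1 : |η x' - η x - ηs x' + ηs x| = |η x - η x' - ηs x + ηs x'| := by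
      rw [← abs_neg]; ring_nf
    have e2 : |x' - x| = |x - x'| := abs_sub_comm _ _
    have e3 : |η x' - η x| = |η x - η x'| := abs_sub_comm _ _
    have e4 : |ηs x' - ηs x| = |ηs x - ηs x'| := abs_sub_comm _ _
    have e5 : |1/p * |η x' - η x| ^ p - 1/p * |ηs x' - ηs x| ^ p|
        = |1/p * |η x - η x'| ^ p - 1/p * |ηs x - ηs x'| ^ p| := by rw [e3, e4]
    rw [e1, e2, e5] at this
    exact this
  · exact main x x' h hne hnes
end

section
/- Let ρ₀ be a probability measure on ℝ and η, φ ∈ L²(ρ₀). Define E_a[η] = (1/4)∬ (η(x)-η(x'))² dρ₀(x)dρ₀(x') and E_r[η] = -(1/4)∬ |η(x)-η(x')| dρ₀(x)dρ₀(x'). Then the directional derivative of E = E_r + E_a at η in direction φ exists and equals (d/ds) E[η + sφ]|_{s=0} = ∬ ( -sgn(η(x)-η(x'))/4 + (η(x)-η(x'))/2 )·(φ(x)-φ(x')) dρ₀(x) dρ₀(x'), provided the set {(x,x') : η(x) = η(x')} off the diagonal has (ρ₀×ρ₀)-measure zero (e.g., η strictly increasing and ρ₀ atomless). -/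
open MeasureTheory Real

private lemma measurable_real_sign : Measurable Real.sign := by
  have : Real.sign = fun r : ℝ => if r < 0 then (-1 : ℝ) else if 0 < r then 1 else 0 := by
    funext r; rfl
  rw [this]
  exact Measurable.ite (measurableSet_lt measurable_id measurable_const) measurable_const
    (Measurable.ite (measurableSet_lt measurable_const measurable_id) measurable_const
      measurable_const)

private lemma aux_deriv (a b : ℝ) (h : a ≠ 0 ∨ b = 0) :
    HasDerivAt (fun s : ℝ => -|a + s * b| / 4 + (a + s * b) ^ 2 / 4)
      ((-(Real.sign a) / 4 + a / 2) * b) 0 := by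
  have hlin : HasDerivAt (fun s : ℝ => a + s * b) b 0 :=
    (hasDerivAt_mul_const b).const_add a
  have hq : HasDerivAt (fun s : ℝ => (a + s * b) ^ 2 / 4) (a * b / 2) 0 := by
    have h2 := (hlin.pow 2).div_const 4
    refine h2.congr_deriv ?_
    norm_num
    ring
  rcases h with ha | hb
  · have hc : Filter.Tendsto (fun s : ℝ => a + s * b) (nhds 0) (nhds a) := by
      simpa using hlin.continuousAt.tendsto
    have hsign : HasDerivAt (fun s : ℝ => -|a + s * b| / 4) (-(Real.sign a) * b / 4) 0 := by
      rcases ha.lt_or_gt with hlt | hgt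
      · have hev : (fun s : ℝ => -|a + s * b| / 4) =ᶠ[nhds (0 : ℝ)]
            fun s : ℝ => (a + s * b) / 4 := by
          filter_upwards [hc.eventually (eventually_lt_nhds hlt)] with s hs
          rw [abs_of_neg hs]; ring
        have := (hlin.div_const 4).congr_of_eventuallyEq hev
        refine this.congr_deriv ?_
        rw [Real.sign_of_neg hlt]; ring
      · have hev : (fun s : ℝ => -|a + s * b| / 4) =ᶠ[nhds (0 : ℝ)]
            fun s : ℝ => -((a + s * b) / 4) := by
          filter_upwards [hc.eventually (eventually_gt_nhds hgt)] with s hs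
          rw [abs_of_pos hs]; ring
        have := ((hlin.div_const 4).neg).congr_of_eventuallyEq hev
        refine this.congr_deriv ?_
        rw [Real.sign_of_pos hgt]; ring
    have := hsign.add hq
    refine this.congr_deriv ?_
    ring
  · subst hb
    simpa using hasDerivAt_const (0 : ℝ) (-|a| / 4)

/-- First variation of the interaction energy `E = E_r + E_a` with kernels
`K_r(y) = -|y|/4` and `K_a(y) = y²/4`, at `η` in direction `φ`. -/
theorem stmt_14 (ρ₀ : Measure ℝ) [IsProbabilityMeasure ρ₀]
    (η φ : ℝ → ℝ) (hη : MemLp η 2 ρ₀) (hφ : MemLp φ 2 ρ₀)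
    (hnull : (ρ₀.prod ρ₀) {p : ℝ × ℝ | η p.1 = η p.2 ∧ p.1 ≠ p.2} = 0) :
    HasDerivAt
      (fun s : ℝ =>
        ∫ p, (-(|((fun x => η x + s * φ x) p.1 - (fun x => η x + s * φ x) p.2)|) / 4
          + ((fun x => η x + s * φ x) p.1 - (fun x => η x + s * φ x) p.2) ^ 2 / 4)
          ∂(ρ₀.prod ρ₀))
      (∫ p, (-(Real.sign (η p.1 - η p.2)) / 4 + (η p.1 - η p.2) / 2) * (φ p.1 - φ p.2)
        ∂(ρ₀.prod ρ₀))
      0 := by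
  have hmpf : MeasurePreserving (Prod.fst : ℝ × ℝ → ℝ) (ρ₀.prod ρ₀) ρ₀ :=
    ⟨measurable_fst, by simp⟩
  have hmps : MeasurePreserving (Prod.snd : ℝ × ℝ → ℝ) (ρ₀.prod ρ₀) ρ₀ :=
    ⟨measurable_snd, by simp⟩
  have hηA : MemLp (fun p : ℝ × ℝ => η p.1 - η p.2) 2 (ρ₀.prod ρ₀) :=
    (hη.comp_measurePreserving hmpf).sub (hη.comp_measurePreserving hmps)
  have hφB : MemLp (fun p : ℝ × ℝ => φ p.1 - φ p.2) 2 (ρ₀.prod ρ₀) :=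
    (hφ.comp_measurePreserving hmpf).sub (hφ.comp_measurePreserving hmps)
  have hA2 : Integrable (fun p : ℝ × ℝ => (η p.1 - η p.2) ^ 2) (ρ₀.prod ρ₀) :=
    hηA.integrable_sq
  have hB2 : Integrable (fun p : ℝ × ℝ => (φ p.1 - φ p.2) ^ 2) (ρ₀.prod ρ₀) :=
    hφB.integrable_sq
  have hAabs : Integrable (fun p : ℝ × ℝ => |η p.1 - η p.2|) (ρ₀.prod ρ₀) :=
    (hηA.integrable one_le_two).abs
  have hBabs : Integrable (fun p : ℝ × ℝ => |φ p.1 - φ p.2|) (ρ₀.prod ρ₀) :=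
    (hφB.integrable one_le_two).abs
  have hmain := hasDerivAt_integral_of_dominated_loc_of_lip (μ := ρ₀.prod ρ₀) (x₀ := (0 : ℝ))
    (F := fun (s : ℝ) (p : ℝ × ℝ) =>
      -|(η p.1 - η p.2) + s * (φ p.1 - φ p.2)| / 4
        + ((η p.1 - η p.2) + s * (φ p.1 - φ p.2)) ^ 2 / 4)
    (F' := fun p : ℝ × ℝ =>
      (-(Real.sign (η p.1 - η p.2)) / 4 + (η p.1 - η p.2) / 2) * (φ p.1 - φ p.2))
    (bound := fun p : ℝ × ℝ =>
      |φ p.1 - φ p.2| / 4 + ((η p.1 - η p.2) ^ 2 + (φ p.1 - φ p.2) ^ 2) / 4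
        + (φ p.1 - φ p.2) ^ 2 / 2)
    (s := Metric.ball 0 1) (Metric.ball_mem_nhds _ one_pos) ?_ ?_ ?_ ?_ ?_ ?_
  · -- conclude
    have key : ∀ (s : ℝ) (p : ℝ × ℝ),
        (η p.1 + s * φ p.1) - (η p.2 + s * φ p.2)
          = (η p.1 - η p.2) + s * (φ p.1 - φ p.2) := by
      intro s p; ring
    simp only []
    simp only [key]
    exact hmain.2
  · -- measurability of F s
    refine Filter.Eventually.of_forall fun s => ?_
    have hABm : AEMeasurable (fun p : ℝ × ℝ => (η p.1 - η p.2) + s * (φ p.1 - φ p.2))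
        (ρ₀.prod ρ₀) :=
      hηA.aestronglyMeasurable.aemeasurable.add
        (hφB.aestronglyMeasurable.aemeasurable.const_mul s)
    have habs : AEMeasurable (fun p : ℝ × ℝ => |(η p.1 - η p.2) + s * (φ p.1 - φ p.2)|)
        (ρ₀.prod ρ₀) := continuous_abs.measurable.comp_aemeasurable hABm
    exact ((habs.neg.div_const 4).add ((hABm.mul hABm |>.div_const 4).congr
      (by filter_upwards with p; simp only [Pi.mul_apply]; ring))).aestronglyMeasurable
  · -- integrability of F 0
    simp only [zero_mul, add_zero]
    exact (hAabs.neg.div_const 4).add (hA2.div_const 4)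
  · -- measurability of F'
    have h1 : AEMeasurable (fun p : ℝ × ℝ => Real.sign (η p.1 - η p.2)) (ρ₀.prod ρ₀) :=
      measurable_real_sign.comp_aemeasurable hηA.aestronglyMeasurable.aemeasurable
    exact (((h1.neg.div_const 4).add
      (hηA.aestronglyMeasurable.aemeasurable.div_const 2)).mul
      hφB.aestronglyMeasurable.aemeasurable).aestronglyMeasurable
  · -- Lipschitz bound
    refine Filter.Eventually.of_forall fun p => ?_
    apply LipschitzOnWith.of_dist_le_mul
    intro s hs t ht
    have hs1 : |s| < 1 := by simpa [Real.dist_eq] using hs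
    have ht1 : |t| < 1 := by simpa [Real.dist_eq] using ht
    rw [Real.dist_eq, Real.dist_eq]
    beta_reduce
    generalize η p.1 - η p.2 = a
    generalize φ p.1 - φ p.2 = b
    have hco : ((Real.nnabs (|b| / 4 + (a ^ 2 + b ^ 2) / 4 + b ^ 2 / 2)) : ℝ)
        = |b| / 4 + (a ^ 2 + b ^ 2) / 4 + b ^ 2 / 2 := by
      rw [Real.coe_nnabs, abs_of_nonneg (by positivity)]
    rw [hco]
    have h1 : abs (abs (a + s * b) - abs (a + t * b)) ≤ |s - t| * |b| := by
      calc abs (abs (a + s * b) - abs (a + t * b)) ≤ |(a + s * b) - (a + t * b)| :=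
            abs_abs_sub_abs_le_abs_sub _ _
        _ = |s - t| * |b| := by
            rw [show (a + s * b) - (a + t * b) = (s - t) * b by ring, abs_mul]
    have h2 : |(a + s * b) ^ 2 - (a + t * b) ^ 2| ≤ |s - t| * |b| * (2 * |a| + 2 * |b|) := by
      rw [show (a + s * b) ^ 2 - (a + t * b) ^ 2 = ((s - t) * b) * (2 * a + (s + t) * b) by ring,
        abs_mul, abs_mul]
      have hfac : |2 * a + (s + t) * b| ≤ 2 * |a| + 2 * |b| := by
        calc |2 * a + (s + t) * b| ≤ |2 * a| + |(s + t) * b| := abs_add_le _ _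
          _ ≤ 2 * |a| + 2 * |b| := by
              rw [abs_mul, abs_mul]
              have : |s + t| ≤ 2 := by
                calc |s + t| ≤ |s| + |t| := abs_add_le _ _
                  _ ≤ 2 := by linarith
              have hb0 : (0 : ℝ) ≤ |b| := abs_nonneg _
              have h2a : |(2 : ℝ)| = 2 := by norm_num
              nlinarith [abs_nonneg a]
      exact mul_le_mul_of_nonneg_left hfac (by positivity)
    have hsplit : abs ((-abs (a + s * b) / 4 + (a + s * b) ^ 2 / 4)
          - (-abs (a + t * b) / 4 + (a + t * b) ^ 2 / 4))
        ≤ abs (abs (a + s * b) - abs (a + t * b)) / 4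
          + abs ((a + s * b) ^ 2 - (a + t * b) ^ 2) / 4 := by
      rw [show (-abs (a + s * b) / 4 + (a + s * b) ^ 2 / 4)
            - (-abs (a + t * b) / 4 + (a + t * b) ^ 2 / 4)
          = -(abs (a + s * b) - abs (a + t * b)) / 4
            + ((a + s * b) ^ 2 - (a + t * b) ^ 2) / 4 by ring]
      calc abs ((-(abs (a + s * b) - abs (a + t * b))) / 4
              + ((a + s * b) ^ 2 - (a + t * b) ^ 2) / 4)
          ≤ abs ((-(abs (a + s * b) - abs (a + t * b))) / 4)
              + abs (((a + s * b) ^ 2 - (a + t * b) ^ 2) / 4) :=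
            abs_add_le _ _
        _ = abs (abs (a + s * b) - abs (a + t * b)) / 4
              + abs ((a + s * b) ^ 2 - (a + t * b) ^ 2) / 4 := by
            rw [abs_div, abs_div, abs_neg]; norm_num
    have hab : |a| * |b| ≤ (a ^ 2 + b ^ 2) / 2 := by
      nlinarith [sq_nonneg (|a| - |b|), sq_abs a, sq_abs b]
    have hst : (0 : ℝ) ≤ |s - t| := abs_nonneg _
    have hbb : |b| * |b| = b ^ 2 := by rw [← sq_abs b]; ring
    calc abs ((-abs (a + s * b) / 4 + (a + s * b) ^ 2 / 4)
            - (-abs (a + t * b) / 4 + (a + t * b) ^ 2 / 4))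
        ≤ |s - t| * |b| / 4 + |s - t| * |b| * (2 * |a| + 2 * |b|) / 4 := by
          linarith [hsplit, h1, h2]
      _ = |s - t| * (|b| / 4 + |a| * |b| / 2 + |b| * |b| / 2) := by ring
      _ ≤ |s - t| * (|b| / 4 + (a ^ 2 + b ^ 2) / 4 + b ^ 2 / 2) := by
          refine mul_le_mul_of_nonneg_left ?_ hst
          rw [hbb]; linarith [hab]
      _ = (|b| / 4 + (a ^ 2 + b ^ 2) / 4 + b ^ 2 / 2) * |s - t| := by ring
  · -- integrability of bound
    exact ((hBabs.div_const 4).add ((hA2.add hB2).div_const 4)).add (hB2.div_const 2)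
  · -- a.e. differentiability
    have h0 : ∀ᵐ p ∂(ρ₀.prod ρ₀), p ∉ {p : ℝ × ℝ | η p.1 = η p.2 ∧ p.1 ≠ p.2} :=
      measure_eq_zero_iff_ae_notMem.mp hnull
    filter_upwards [h0] with p hp
    by_cases hA0 : η p.1 = η p.2
    · have hp12 : p.1 = p.2 := by
        by_contra hne; exact hp ⟨hA0, hne⟩
      exact aux_deriv _ _ (Or.inr (by rw [hp12, sub_self]))
    · exact aux_deriv _ _ (Or.inl (sub_ne_zero.mpr hA0))
end
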